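/- Let q ∈ ℂ[z] with q(0) = 0, and for each n set P_n = Σ_{j=0}^n q(G)^j(x^n)/j! (the sum is exhaustive since q(G) lowers degree, so q(G)^j(x^n) = 0 for j > n). Then P_n is a monic polynomial of degree n and is an eigenfunction of the operator L := q′(G)∘G + x∂ with eigenvalue n, i.e., L(P_n) = n·P_n for all n ≥ 0. -/
import Mathlib


open Polynomial

/-- Pochhammer symbol `(a)_j = a(a+1)⋯(a+j−1)`. -/
noncomputable def poch (a : ℂ) (j : ℕ) : ℂ := ∏ s ∈ Finset.range j, (a + s)

/-- The derivative operator `∂` on `ℂ[x]`. -/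
noncomputable def Dop : Module.End ℂ (Polynomial ℂ) := Polynomial.derivative

/-- Multiplication by `x` on `ℂ[x]`. -/
noncomputable def Xop : Module.End ℂ (Polynomial ℂ) := LinearMap.mulLeft ℂ Polynomial.X

/-- `H = x∂`. -/
noncomputable def Hop : Module.End ℂ (Polynomial ℂ) := Xop * Dop

/-- `G = R(H)∘∂` with `R(H) = ρ·∏_{k=1}^d (H + α_k + 1)`. -/
noncomputable def Gop (d : ℕ) (α : ℕ → ℂ) (ρ : ℂ) : Module.End ℂ (Polynomial ℂ) :=
  (Polynomial.aeval Hop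
    (Polynomial.C ρ * ∏ k ∈ Finset.range d, (Polynomial.X + Polynomial.C (α k + 1)))) * Dop

lemma Dop_apply (p : ℂ[X]) : Dop p = derivative p := rfl

lemma Hop_X_pow (m : ℕ) : Hop ((X : ℂ[X]) ^ m) = (m : ℂ) • X ^ m := by
  cases m with
  | zero => simp [Hop, Xop, Dop, Module.End.mul_apply]
  | succ k =>
    simp only [Hop, Xop, Module.End.mul_apply, LinearMap.mulLeft_apply,
      Dop_apply, derivative_X_pow]
    rw [smul_eq_C_mul]
    push_cast
    simp [pow_succ]
    ring

lemma aeval_Hop_X_pow (s : ℂ[X]) (m : ℕ) :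
    (Polynomial.aeval Hop s) ((X : ℂ[X]) ^ m) = s.eval (m : ℂ) • X ^ m := by
  induction s using Polynomial.induction_on' with
  | add p r hp hr => simp [hp, hr, add_smul]
  | monomial i a =>
    have hpow : ∀ j : ℕ, (Hop ^ j) ((X : ℂ[X]) ^ m) = ((m : ℂ) ^ j) • X ^ m := by
      intro j
      induction j with
      | zero => simp
      | succ k ih =>
        rw [pow_succ', Module.End.mul_apply, ih, map_smul, Hop_X_pow, smul_smul, pow_succ]
    rw [aeval_monomial, Module.End.mul_apply, hpow, map_smul,
      Module.algebraMap_end_apply, eval_monomial, smul_smul, mul_comm]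

lemma Gop_C (d : ℕ) (α : ℕ → ℂ) (ρ : ℂ) (a : ℂ) : Gop d α ρ (C a) = 0 := by
  simp [Gop, Module.End.mul_apply, Dop_apply]

lemma Gop_X_pow (d : ℕ) (α : ℕ → ℂ) (ρ : ℂ) (m : ℕ) :
    ∃ c : ℂ, Gop d α ρ ((X : ℂ[X]) ^ (m + 1)) = c • X ^ m := by
  have : Gop d α ρ ((X : ℂ[X]) ^ (m + 1)) =
      (Polynomial.aeval Hop
        (Polynomial.C ρ * ∏ k ∈ Finset.range d, (Polynomial.X + Polynomial.C (α k + 1))))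
        (derivative ((X : ℂ[X]) ^ (m + 1))) := rfl
  rw [this, derivative_X_pow]
  simp only [Nat.add_sub_cancel]
  rw [show (C ((m + 1 : ℕ) : ℂ) * X ^ m : ℂ[X]) = ((m + 1 : ℕ) : ℂ) • X ^ m from
      (smul_eq_C_mul _).symm, map_smul, aeval_Hop_X_pow, smul_smul]
  exact ⟨_, rfl⟩

lemma Gop_one (d : ℕ) (α : ℕ → ℂ) (ρ : ℂ) : Gop d α ρ (1 : ℂ[X]) = 0 := by
  rw [← C_1]; exact Gop_C d α ρ 1

lemma HG_comm (d : ℕ) (α : ℕ → ℂ) (ρ : ℂ) :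
    Hop * Gop d α ρ = Gop d α ρ * Hop - Gop d α ρ := by
  apply LinearMap.ext; intro p
  induction p using Polynomial.induction_on' with
  | add p r hp hr =>
    simp only [map_add, Module.End.mul_apply, LinearMap.sub_apply] at *
    rw [hp, hr]
  | monomial m a =>
    rw [← smul_X_eq_monomial]
    simp only [map_smul, Module.End.mul_apply, LinearMap.sub_apply]
    congr 1
    cases m with
    | zero =>
      simp [pow_zero, Gop_one, Hop, Xop, Dop_apply, Module.End.mul_apply]
    | succ k =>
      obtain ⟨c, hc⟩ := Gop_X_pow d α ρ k
      rw [hc, map_smul, Hop_X_pow, Hop_X_pow, map_smul, hc, smul_smul, smul_smul, ← sub_smul]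
      congr 1
      push_cast
      ring

lemma HGpow_comm (d : ℕ) (α : ℕ → ℂ) (ρ : ℂ) (i : ℕ) :
    Hop * Gop d α ρ ^ i = Gop d α ρ ^ i * Hop - (i : ℂ) • Gop d α ρ ^ i := by
  induction i with
  | zero => simp
  | succ k ih =>
    rw [pow_succ, ← mul_assoc, ih, sub_mul, smul_mul_assoc, mul_assoc, HG_comm, mul_sub,
      ← mul_assoc, ← pow_succ]
    rw [sub_sub]
    congr 1
    push_cast
    rw [add_smul, one_smul, add_comm]

lemma aeval_G_comm (d : ℕ) (α : ℕ → ℂ) (ρ : ℂ) (s t : ℂ[X]) :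
    aeval (Gop d α ρ) s * aeval (Gop d α ρ) t
      = aeval (Gop d α ρ) t * aeval (Gop d α ρ) s := by
  rw [← map_mul, mul_comm, map_mul]

lemma HQ_comm (d : ℕ) (α : ℕ → ℂ) (ρ : ℂ) (s : ℂ[X]) :
    Hop * aeval (Gop d α ρ) s
      = aeval (Gop d α ρ) s * Hop - aeval (Gop d α ρ) (derivative s) * Gop d α ρ := by
  induction s using Polynomial.induction_on' with
  | add p r hp hr =>
    rw [map_add, map_add, mul_add, hp, hr, map_add, add_mul, add_mul]
    abel
  | monomial i a =>
    rw [aeval_monomial, derivative_monomial, aeval_monomial,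
      Algebra.algebraMap_eq_smul_one, Algebra.algebraMap_eq_smul_one]
    simp only [smul_mul_assoc, one_mul, mul_smul_comm]
    rw [HGpow_comm, smul_sub, smul_smul]
    congr 1
    cases i with
    | zero => simp
    | succ k =>
      rw [Nat.add_sub_cancel, ← pow_succ]

lemma HQpow_comm (d : ℕ) (α : ℕ → ℂ) (ρ : ℂ) (s : ℂ[X]) (j : ℕ) :
    Hop * aeval (Gop d α ρ) s ^ j
      = aeval (Gop d α ρ) s ^ j * Hop
        - (j : ℂ) • (aeval (Gop d α ρ) (derivative s) * Gop d α ρ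
            * aeval (Gop d α ρ) s ^ (j - 1)) := by
  set G := Gop d α ρ
  set Q := aeval G s
  set A := aeval G (derivative s) * G with hA
  induction j with
  | zero => simp
  | succ k ih =>
    rw [pow_succ, ← mul_assoc, ih, sub_mul, smul_mul_assoc, mul_assoc, HQ_comm, mul_sub,
      ← mul_assoc, ← pow_succ, Nat.add_sub_cancel]
    have hQA : Q ^ k * A = A * Q ^ k := by
      rw [hA, mul_assoc]
      have hGQ : G * Q ^ k = Q ^ k * G := by
        have hX : G = aeval G (X : ℂ[X]) := (aeval_X G).symm
        rw [hX, ← map_pow, aeval_G_comm]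
      rw [hGQ, ← mul_assoc, ← mul_assoc, ← map_pow, aeval_G_comm]
    have hAk : (k : ℂ) • (A * Q ^ (k - 1) * Q) = (k : ℂ) • (A * Q ^ k) := by
      cases k with
      | zero => simp
      | succ m => rw [Nat.add_sub_cancel, mul_assoc, ← pow_succ]
    rw [hAk, hQA, sub_sub]
    congr 1
    push_cast
    rw [add_smul, one_smul, add_comm]

lemma Gop_mem_degreeLT (d : ℕ) (α : ℕ → ℂ) (ρ : ℂ) (m : ℕ) :
    ∀ p ∈ degreeLT ℂ (m + 1), Gop d α ρ p ∈ degreeLT ℂ m := by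
  classical
  suffices h : degreeLT ℂ (m + 1) ≤ (degreeLT ℂ m).comap (Gop d α ρ) by
    exact fun p hp => h hp
  rw [degreeLT_eq_span_X_pow, Submodule.span_le]
  intro x hx
  simp only [Finset.coe_image, Set.mem_image, Finset.mem_coe, Finset.mem_range] at hx
  obtain ⟨i, hi, rfl⟩ := hx
  rw [SetLike.mem_coe, Submodule.mem_comap]
  cases i with
  | zero => rw [pow_zero, Gop_one]; exact Submodule.zero_mem _
  | succ k =>
    obtain ⟨c, hc⟩ := Gop_X_pow d α ρ k
    rw [hc]
    refine Submodule.smul_mem _ _ ?_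
    rw [mem_degreeLT, degree_X_pow]
    exact_mod_cast (by omega : k < m)

lemma Gop_pres (d : ℕ) (α : ℕ → ℂ) (ρ : ℂ) (m : ℕ) :
    ∀ p ∈ degreeLT ℂ m, Gop d α ρ p ∈ degreeLT ℂ m := by
  cases m with
  | zero =>
    intro p hp
    rw [mem_degreeLT] at hp ⊢
    have : p = 0 := degree_eq_bot.mp (Nat.WithBot.lt_zero_iff.mp (by exact_mod_cast hp))
    rw [this, map_zero, degree_zero]
    exact WithBot.bot_lt_coe _
  | succ k =>
    intro p hp
    exact degreeLT_mono (Nat.le_succ k) (Gop_mem_degreeLT d α ρ k p hp)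

lemma Gop_pow_pres (d : ℕ) (α : ℕ → ℂ) (ρ : ℂ) (i m : ℕ) :
    ∀ p ∈ degreeLT ℂ m, (Gop d α ρ ^ i) p ∈ degreeLT ℂ m := by
  induction i with
  | zero => intro p hp; simpa using hp
  | succ k ih =>
    intro p hp
    rw [pow_succ', Module.End.mul_apply]
    exact Gop_pres d α ρ m _ (ih p hp)

lemma aeval_Gop_pres (d : ℕ) (α : ℕ → ℂ) (ρ : ℂ) (s : ℂ[X]) (m : ℕ) :
    ∀ p ∈ degreeLT ℂ m, (aeval (Gop d α ρ) s) p ∈ degreeLT ℂ m := by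
  induction s using Polynomial.induction_on' with
  | add u v hu hv =>
    intro p hp
    rw [map_add, LinearMap.add_apply]
    exact Submodule.add_mem _ (hu p hp) (hv p hp)
  | monomial i a =>
    intro p hp
    rw [aeval_monomial, Module.End.mul_apply, Module.algebraMap_end_apply]
    exact Submodule.smul_mem _ _ (Gop_pow_pres d α ρ i m p hp)

lemma Q_low (d : ℕ) (α : ℕ → ℂ) (ρ : ℂ) (q : ℂ[X]) (hq : q.eval 0 = 0) (m : ℕ) :
    ∀ p ∈ degreeLT ℂ (m + 1), (aeval (Gop d α ρ) q) p ∈ degreeLT ℂ m := by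
  intro p hp
  obtain ⟨r, hr⟩ : (X : ℂ[X]) ∣ q := X_dvd_iff.mpr (by rw [coeff_zero_eq_eval_zero, hq])
  rw [hr, map_mul, aeval_X, Module.End.mul_apply]
  exact Gop_mem_degreeLT d α ρ m _ (aeval_Gop_pres d α ρ r (m + 1) p hp)

lemma Qpow_low (d : ℕ) (α : ℕ → ℂ) (ρ : ℂ) (q : ℂ[X]) (hq : q.eval 0 = 0) (n j : ℕ) :
    ((aeval (Gop d α ρ) q) ^ j) ((X : ℂ[X]) ^ n) ∈ degreeLT ℂ (n + 1 - j) := by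
  induction j with
  | zero =>
    rw [pow_zero, Module.End.one_apply, mem_degreeLT, degree_X_pow]
    exact_mod_cast (by omega : n < n + 1 - 0)
  | succ k ih =>
    rw [pow_succ', Module.End.mul_apply]
    rcases le_or_gt k n with h | h
    · have e1 : n + 1 - k = (n - k) + 1 := by omega
      have e2 : n + 1 - (k + 1) = n - k := by omega
      rw [e1] at ih
      rw [e2]
      exact Q_low d α ρ q hq (n - k) _ ih
    · have e1 : n + 1 - k = 0 := by omega
      have e2 : n + 1 - (k + 1) = 0 := by omega
      rw [e1, mem_degreeLT] at ih
      have h0 : ((aeval (Gop d α ρ)) q ^ k) ((X : ℂ[X]) ^ n) = 0 :=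
        degree_eq_bot.mp (Nat.WithBot.lt_zero_iff.mp (by exact_mod_cast ih))
      rw [h0, map_zero]
      exact Submodule.zero_mem _

lemma Gop_eq_zero_of_degreeLT_one (d : ℕ) (α : ℕ → ℂ) (ρ : ℂ) (p : ℂ[X])
    (hp : p ∈ degreeLT ℂ 1) : Gop d α ρ p = 0 := by
  rw [mem_degreeLT] at hp
  have h0 : p.degree ≤ 0 := Nat.WithBot.lt_one_iff_le_zero.mp (by exact_mod_cast hp)
  rw [eq_C_of_degree_le_zero h0, Gop_C]

/-- `P_n = Σ_{j=0}^n q(G)^j(x^n)/j!` is monic of degree `n` and `L P_n = n·P_n`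
for `L = q′(G)∘G + x∂`. -/
theorem stmt3 (d : ℕ) (α : ℕ → ℂ) (ρ : ℂ) (hρ : ρ ≠ 0)
    (q : Polynomial ℂ) (hq : q.eval 0 = 0) (n : ℕ) :
    let G := Gop d α ρ
    let P : Polynomial ℂ := ∑ j ∈ Finset.range (n + 1),
      ((j.factorial : ℂ))⁻¹ • ((Polynomial.aeval G q) ^ j) (Polynomial.X ^ n)
    let L := Polynomial.aeval G (Polynomial.derivative q) * G + Xop * Dop
    P.Monic ∧ P.natDegree = n ∧ L P = (n : ℂ) • P := by
  intro G P L
  have hPdef : P = ∑ j ∈ Finset.range (n + 1),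
      ((j.factorial : ℂ))⁻¹ • ((aeval G q) ^ j) ((X : ℂ[X]) ^ n) := rfl
  have hLdef : L = aeval G (derivative q) * G + Xop * Dop := rfl
  set Q : Module.End ℂ ℂ[X] := aeval G q with hQ
  set A : Module.End ℂ ℂ[X] := aeval G (derivative q) * G with hA
  -- splitting off the top term
  have hsplit : P = (∑ i ∈ Finset.range n,
      (((i + 1).factorial : ℂ))⁻¹ • (Q ^ (i + 1)) ((X : ℂ[X]) ^ n)) + X ^ n := by
    rw [hPdef, Finset.sum_range_succ']
    simp [Nat.factorial_zero]
  set T : ℂ[X] := ∑ i ∈ Finset.range n,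
      (((i + 1).factorial : ℂ))⁻¹ • (Q ^ (i + 1)) ((X : ℂ[X]) ^ n) with hT
  have hTmem : T ∈ degreeLT ℂ n := by
    apply Submodule.sum_mem
    intro i hi
    apply Submodule.smul_mem
    exact degreeLT_mono (by omega : n + 1 - (i + 1) ≤ n) (Qpow_low d α ρ q hq n (i + 1))
  have hTdeg : T.degree < ((X : ℂ[X]) ^ n).degree := by
    rw [degree_X_pow]
    exact mem_degreeLT.mp hTmem
  have hmonic : P.Monic := by
    rw [hsplit, add_comm]
    exact (monic_X_pow n).add_of_left hTdeg
  have hdegP : P.degree = (n : ℕ) := by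
    rw [hsplit, add_comm, degree_add_eq_left_of_degree_lt hTdeg, degree_X_pow]
  refine ⟨hmonic, natDegree_eq_of_degree_eq_some hdegP, ?_⟩
  -- the eigenvalue equation
  have hGQn : G ((Q ^ n) ((X : ℂ[X]) ^ n)) = 0 := by
    apply Gop_eq_zero_of_degreeLT_one d α ρ
    have := Qpow_low d α ρ q hq n n
    rwa [(by omega : n + 1 - n = 1)] at this
  have key : ∀ j : ℕ, Hop ((Q ^ j) ((X : ℂ[X]) ^ n))
      = (n : ℂ) • (Q ^ j) ((X : ℂ[X]) ^ n) - (j : ℂ) • A ((Q ^ (j - 1)) ((X : ℂ[X]) ^ n)) := by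
    intro j
    have h := congrArg (fun (U : Module.End ℂ ℂ[X]) => U ((X : ℂ[X]) ^ n))
      (HQpow_comm d α ρ q j)
    simp only [Module.End.mul_apply, LinearMap.sub_apply, LinearMap.smul_apply] at h
    rw [h, Hop_X_pow, map_smul]
    rfl
  have hHP : Hop P = (n : ℂ) • P
      - ∑ j ∈ Finset.range (n + 1), ((j.factorial : ℂ)⁻¹ * j) • A ((Q ^ (j - 1)) ((X : ℂ[X]) ^ n)) := by
    rw [hPdef, map_sum, Finset.smul_sum, ← Finset.sum_sub_distrib]
    apply Finset.sum_congr rfl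
    intro j hj
    rw [map_smul, key j, smul_sub, smul_smul, smul_smul, smul_smul]
    ring_nf
  have hS : ∑ j ∈ Finset.range (n + 1), ((j.factorial : ℂ)⁻¹ * j) • A ((Q ^ (j - 1)) ((X : ℂ[X]) ^ n))
      = A (∑ i ∈ Finset.range n, ((i.factorial : ℂ))⁻¹ • (Q ^ i) ((X : ℂ[X]) ^ n)) := by
    rw [Finset.sum_range_succ', map_sum]
    simp only [Nat.cast_zero, mul_zero, zero_smul, add_zero, Nat.add_sub_cancel, map_smul]
    apply Finset.sum_congr rfl
    intro i hi
    congr 1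
    rw [Nat.factorial_succ]
    push_cast
    have h1 : ((i : ℂ) + 1) ≠ 0 := Nat.cast_add_one_ne_zero i
    have h2 : ((i.factorial : ℂ)) ≠ 0 := by
      exact_mod_cast Nat.cast_ne_zero.mpr i.factorial_ne_zero
    field_simp
  have hAP : A P = A (∑ i ∈ Finset.range n, ((i.factorial : ℂ))⁻¹ • (Q ^ i) ((X : ℂ[X]) ^ n)) := by
    rw [hPdef, Finset.sum_range_succ, map_add, map_smul]
    have : A ((Q ^ n) ((X : ℂ[X]) ^ n)) = 0 := by
      rw [hA, Module.End.mul_apply, hGQn, map_zero]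
    rw [this, smul_zero, add_zero]
  rw [hLdef, LinearMap.add_apply]
  have hXD : (Xop * Dop) P = Hop P := rfl
  rw [hXD, hHP, hS, hAP]
  abel
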